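/- arXiv:2312.05392 — 4 statements merged into one kernel-verified Lean document; each statement's English description precedes it below -/
import Mathlib

section
/- Let pa + pb = 1, let faa, fab, fba, fbb be defined by the pair-correlated generating equations for classifiers i and j, let fai = faa + fab, faj = faa + fba, fbi = fba + fbb, fbj = fab + fbb, and let Δij = faa − fai·faj. Then (sai − fai)·(sbj − fbj) + pa·(Ga − Δij) + pb·(Gb − Δij) = 0; equivalently, Δij = pa·Ga + pb·Gb + pa·pb·(sai + sbi − 1)·(saj + sbj − 1). -/
/-- The pair-correlation postulate: for pair-correlated generating equations with
`pa + pb = 1`, marginals `fai, faj, fbi, fbj` and pair moment `Δij = faa − fai·faj`,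
we have `(sai − fai)·(sbj − fbj) + pa·(Ga − Δij) + pb·(Gb − Δij) = 0`; equivalently
`Δij = pa·Ga + pb·Gb + pa·pb·(sai + sbi − 1)·(saj + sbj − 1)`. -/
theorem pair_correlation_postulate
    (pa pb sai sbi saj sbj Ga Gb faa fab fba fbb fai faj fbi fbj Δij : ℝ)
    (hp : pa + pb = 1)
    (haa : faa = pa * (sai * saj + Ga) + pb * ((1 - sbi) * (1 - sbj) + Gb))
    (hab : fab = pa * (sai * (1 - saj) - Ga) + pb * ((1 - sbi) * sbj - Gb))
    (hba : fba = pa * ((1 - sai) * saj - Ga) + pb * (sbi * (1 - sbj) - Gb))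
    (hbb : fbb = pa * ((1 - sai) * (1 - saj) + Ga) + pb * (sbi * sbj + Gb))
    (hfai : fai = faa + fab) (hfaj : faj = faa + fba)
    (hfbi : fbi = fba + fbb) (hfbj : fbj = fab + fbb)
    (hΔ : Δij = faa - fai * faj) :
    (sai - fai) * (sbj - fbj) + pa * (Ga - Δij) + pb * (Gb - Δij) = 0 ∧
      Δij = pa * Ga + pb * Gb + pa * pb * (sai + sbi - 1) * (saj + sbj - 1) := by
  subst haa hab hba hbb hfai hfaj hfbi hfbj hΔ
  have hb : pb = 1 - pa := by linarith
  subst hb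
  constructor <;> ring
end

section
/- There exist real numbers pa, pb ∈ (0,1) with pa + pb = 1 and accuracies sai, sbi, saj, sbj ∈ [0,1] such that, for error-independent classifiers (zero label correlations), the pair error rate eij = pa·(1 − sai)·(1 − saj) + pb·(1 − sbi)·(1 − sbj) is not equal to the product ei·ej of the individual error rates ei = pa·(1 − sai) + pb·(1 − sbi) and ej = pa·(1 − saj) + pb·(1 − sbj). Hence the Platanios factorization assumption eij = ei·ej for error-independent binary classifiers is false. -/
/-- The Platanios factorization assumption is false: there exist prevalences
`pa, pb ∈ (0,1)` with `pa + pb = 1` and accuracies in `[0,1]` for which the pair error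
rate of error-independent classifiers is not the product of the individual error rates. -/
theorem platanios_factorization_false :
    ∃ pa pb sai sbi saj sbj : ℝ,
      0 < pa ∧ pa < 1 ∧ 0 < pb ∧ pb < 1 ∧ pa + pb = 1 ∧
      (0 ≤ sai ∧ sai ≤ 1) ∧ (0 ≤ sbi ∧ sbi ≤ 1) ∧
      (0 ≤ saj ∧ saj ≤ 1) ∧ (0 ≤ sbj ∧ sbj ≤ 1) ∧
      pa * ((1 - sai) * (1 - saj)) + pb * ((1 - sbi) * (1 - sbj)) ≠
        (pa * (1 - sai) + pb * (1 - sbi)) * (pa * (1 - saj) + pb * (1 - sbj)) := by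
  refine ⟨1/2, 1/2, 0, 1, 0, 1, by norm_num⟩
end

section
/- Let f be the voting-pattern frequency function of three error-independent binary classifiers with parameters (pa, sa1, sa2, sa3, sb1, sb2, sb3), and let f' be the frequency function with the label-swapped parameters (1 − pa, sb1, sb2, sb3, sa1, sa2, sa3). Then for every voting pattern v ∈ {a,b}³, f'(v) = f(v̄), where v̄ is the pattern obtained from v by exchanging 'a' and 'b' in every coordinate. In particular, the two parameter settings produce the same multiset of observed voting frequencies, so pa and 1 − pa cannot be distinguished from observation alone. -/
/-- The frequency of a voting pattern `v : Fin 3 → Bool` (`true` = vote 'a') for three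
error-independent binary classifiers with prevalence `pa` and accuracies `sa i, sb i`. -/
noncomputable def votingFreq (pa : ℝ) (sa sb : Fin 3 → ℝ) (v : Fin 3 → Bool) : ℝ :=
  pa * ∏ i, (if v i then sa i else 1 - sa i) +
    (1 - pa) * ∏ i, (if v i then 1 - sb i else sb i)

/-- Label-swap symmetry: the frequency function with parameters
`(1 − pa, sb, sa)` evaluated at any voting pattern `v` equals the frequency function
with parameters `(pa, sa, sb)` evaluated at the label-swapped pattern. Hence `pa` and
`1 − pa` produce the same multiset of observed voting frequencies and cannot be
distinguished from observation alone. -/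
theorem votingFreq_label_swap (pa : ℝ) (sa sb : Fin 3 → ℝ) :
    ∀ v : Fin 3 → Bool,
      votingFreq (1 - pa) sb sa v = votingFreq pa sa sb (fun i => !(v i)) := by
  intro v
  unfold votingFreq
  have h1 : (∏ i, (if v i then sb i else 1 - sb i))
      = ∏ i, (if !(v i) then 1 - sb i else sb i) := by
    apply Finset.prod_congr rfl
    intro i _; cases v i <;> simp
  have h2 : (∏ i, (if v i then 1 - sa i else sa i))
      = ∏ i, (if !(v i) then sa i else 1 - sa i) := by
    apply Finset.prod_congr rfl
    intro i _; cases v i <;> simp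
  rw [h1, h2]; ring
end

section
/- Fix prevalences pa, pb with pa + pb = 1 and accuracies sai, sbi, saj, sbj. Two pairs of label correlations (Ga, Gb) and (Ga', Gb') produce exactly the same four aligned voting-pattern frequencies faa, fab, fba, fbb under the pair-correlated generating equations if and only if pa·Ga + pb·Gb = pa·Ga' + pb·Gb'. In particular, given the individual accuracies and prevalences, the observed frequencies determine the combination pa·Ga + pb·Gb uniquely. -/
/-- Given prevalences with `pa + pb = 1` and fixed accuracies, two correlation pairs
`(Ga, Gb)` and `(Ga', Gb')` produce exactly the same four aligned voting-pattern
frequencies under the pair-correlated generating equations if and only if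
`pa·Ga + pb·Gb = pa·Ga' + pb·Gb'`. In particular the observed frequencies determine
the combination `pa·Ga + pb·Gb` uniquely. -/
theorem pair_correlations_same_frequencies_iff
    (pa pb sai sbi saj sbj Ga Gb Ga' Gb' : ℝ) (hp : pa + pb = 1) :
    (pa * (sai * saj + Ga) + pb * ((1 - sbi) * (1 - sbj) + Gb) =
        pa * (sai * saj + Ga') + pb * ((1 - sbi) * (1 - sbj) + Gb') ∧
      pa * (sai * (1 - saj) - Ga) + pb * ((1 - sbi) * sbj - Gb) =
        pa * (sai * (1 - saj) - Ga') + pb * ((1 - sbi) * sbj - Gb') ∧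
      pa * ((1 - sai) * saj - Ga) + pb * (sbi * (1 - sbj) - Gb) =
        pa * ((1 - sai) * saj - Ga') + pb * (sbi * (1 - sbj) - Gb') ∧
      pa * ((1 - sai) * (1 - saj) + Ga) + pb * (sbi * sbj + Gb) =
        pa * ((1 - sai) * (1 - saj) + Ga') + pb * (sbi * sbj + Gb')) ↔
      pa * Ga + pb * Gb = pa * Ga' + pb * Gb' := by
  constructor
  · rintro ⟨h1, _, _, _⟩; linarith
  · intro h; refine ⟨by linarith, by linarith, by linarith, by linarith⟩
end
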